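/- Let F, G, H be finite groups, U a subgroup of F × G, and V a subgroup of G × H. Then |U| · |V| = |p₂(U)·p₁(V)| · |Γ∩(U,V)| · |U * V|, where p₂(U)·p₁(V) denotes the product subset {g·g' : g ∈ p₂(U), g' ∈ p₁(V)} of G. -/

import Mathlib

/-!
The map `U × V → G`, `(u, v) ↦ u₂ v₁⁻¹`, has image `p₂(U)·p₁(V)`, and two pairs have the same
image exactly when they differ by an element of the subgroup where `u₂ = v₁`, which is `Γ(U,V)`.
Hence `|U|·|V| = |p₂(U)·p₁(V)|·|Γ(U,V)|`. Projecting `Γ(U,V)` onto the outer coordinates `(f, h)`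
is a homomorphism onto `U * V` with kernel `Γ∩(U,V)`, so `|Γ(U,V)| = |Γ∩(U,V)|·|U * V|`.
-/

open scoped Pointwise

section StarPrelude

variable {F G H I : Type*} [Group F] [Group G] [Group H] [Group I]
variable {A : Type*} [CommGroup A]

/-- The star product of subgroups `U ≤ F × G` and `V ≤ G × H`. -/
def starProd (U : Subgroup (F × G)) (V : Subgroup (G × H)) : Subgroup (F × H) where
  carrier := {p | ∃ g : G, (p.1, g) ∈ U ∧ (g, p.2) ∈ V}
  one_mem' := ⟨1, U.one_mem, V.one_mem⟩
  mul_mem' := by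
    rintro ⟨a, b⟩ ⟨c, d⟩ ⟨g, h1, h2⟩ ⟨g', h1', h2'⟩
    exact ⟨g * g', U.mul_mem h1 h1', V.mul_mem h2 h2'⟩
  inv_mem' := by
    rintro ⟨a, b⟩ ⟨g, h1, h2⟩
    exact ⟨g⁻¹, U.inv_mem h1, V.inv_mem h2⟩

infixl:70 " ⋆ " => starProd

theorem mem_starProd {U : Subgroup (F × G)} {V : Subgroup (G × H)} {p : F × H} :
    p ∈ U ⋆ V ↔ ∃ g : G, (p.1, g) ∈ U ∧ (g, p.2) ∈ V := Iff.rfl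

/-- `Γ(U,V) = {(f,g,h) : (f,g) ∈ U, (g,h) ∈ V}`. -/
def gammaSet (U : Subgroup (F × G)) (V : Subgroup (G × H)) : Set (F × G × H) :=
  {p | (p.1, p.2.1) ∈ U ∧ (p.2.1, p.2.2) ∈ V}

/-- `Γ∩(U,V) = {g ∈ G : (1,g) ∈ U and (g,1) ∈ V}`. -/
def gammaCap (U : Subgroup (F × G)) (V : Subgroup (G × H)) : Set G :=
  {g | ((1 : F), g) ∈ U ∧ (g, (1 : H)) ∈ V}

/-- `p₁(U)`, the image of `U ≤ F × G` in `F`. -/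
def proj1 (U : Subgroup (F × G)) : Subgroup F := U.map (MonoidHom.fst F G)

/-- `p₂(U)`, the image of `U ≤ F × G` in `G`. -/
def proj2 (U : Subgroup (F × G)) : Subgroup G := U.map (MonoidHom.snd F G)

/-- `k₁(U) = {f : (f,1) ∈ U}`. -/
def ker1 (U : Subgroup (F × G)) : Set F := {f | (f, (1 : G)) ∈ U}

/-- `k₂(U) = {g : (1,g) ∈ U}`. -/
def ker2 (U : Subgroup (F × G)) : Set G := {g | ((1 : F), g) ∈ U}

end StarPrelude

theorem MonoidHom.card_eq_card_range_mul_inv_mul_card_eqLocus {K G : Type*} [Group K] [Group G]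
    (α β : K →* G) :
    Nat.card K = Nat.card (Set.range fun k => α k * (β k)⁻¹) * Nat.card (α.eqLocus β) := by
  have hrel : ∀ k k' : K, QuotientGroup.leftRel (α.eqLocus β) k k' ↔
      Setoid.ker (fun k => α k * (β k)⁻¹) k k' := fun k k' => by
    rw [Setoid.ker_def, QuotientGroup.leftRel_apply]
    change α (k⁻¹ * k') = β (k⁻¹ * k') ↔ _
    rw [map_mul, map_mul, map_inv, map_inv, inv_mul_eq_iff_eq_mul, ← mul_assoc,
      eq_mul_inv_iff_mul_eq, eq_comm]
  rw [(α.eqLocus β).card_eq_card_quotient_mul_card_subgroup]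
  exact congrArg (· * _)
    (Nat.card_congr ((Quotient.congrRight hrel).trans (Setoid.quotientKerEquivRange _)))

theorem MonoidHom.card_ker_mul_card_range {G M : Type*} [Group G] [Group M] (f : G →* M) :
    Nat.card f.ker * Nat.card f.range = Nat.card G := by
  rw [← f.ker.card_mul_index, Subgroup.index_ker]

namespace StarProduct

variable {F G H : Type*} [Group F] [Group G] [Group H]
  (U : Subgroup (F × G)) (V : Subgroup (G × H))

def innerLeft : U × V →* G := (MonoidHom.snd F G).comp (U.subtype.comp (MonoidHom.fst U V))

def innerRight : U × V →* G := (MonoidHom.fst G H).comp (V.subtype.comp (MonoidHom.snd U V))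

/-- `Γ(U,V)`, realised as the pairs `((f, g), (g, h))` in `U × V`. -/
def gamma : Subgroup (U × V) := (innerLeft U V).eqLocus (innerRight U V)

def outerHom : gamma U V →* F × H where
  toFun x := ((x.1.1 : F × G).1, (x.1.2 : G × H).2)
  map_one' := rfl
  map_mul' _ _ := rfl

theorem range_outerHom : (outerHom U V).range = U ⋆ V := by
  ext ⟨f, h⟩
  constructor
  · rintro ⟨⟨⟨⟨⟨f', g⟩, hu⟩, ⟨⟨g', h'⟩, hv⟩⟩, hg⟩, hfh⟩
    obtain ⟨rfl, rfl⟩ := Prod.ext_iff.mp hfh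
    exact ⟨g, hu, (show g = g' from hg) ▸ hv⟩
  · rintro ⟨g, hu, hv⟩
    exact ⟨⟨(⟨(f, g), hu⟩, ⟨(g, h), hv⟩), rfl⟩, rfl⟩

def kerOuterHomEquiv : (outerHom U V).ker ≃ gammaCap U V where
  toFun x := ⟨(x.1.1.1 : F × G).2, by
    obtain ⟨⟨⟨⟨⟨f, g⟩, hu⟩, ⟨⟨g', h⟩, hv⟩⟩, hg : g = g'⟩, hx⟩ := x
    obtain ⟨rfl, rfl⟩ := Prod.ext_iff.mp hx
    exact ⟨hu, hg ▸ hv⟩⟩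
  invFun g := ⟨⟨(⟨(1, g), g.2.1⟩, ⟨(g, 1), g.2.2⟩), rfl⟩, rfl⟩
  left_inv := by
    rintro ⟨⟨⟨⟨⟨f, g⟩, hu⟩, ⟨⟨g', h⟩, hv⟩⟩, hg : g = g'⟩, hx⟩
    obtain ⟨rfl, rfl⟩ := Prod.ext_iff.mp hx
    subst hg
    rfl
  right_inv _ := rfl

theorem card_gamma : Nat.card (gamma U V) = Nat.card (gammaCap U V) * Nat.card (U ⋆ V) := by
  rw [← (outerHom U V).card_ker_mul_card_range, range_outerHom,
    Nat.card_congr (kerOuterHomEquiv U V)]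

theorem range_innerLeft_mul_inv_innerRight :
    (Set.range fun x => innerLeft U V x * (innerRight U V x)⁻¹) =
      (proj2 U : Set G) * (proj1 V : Set G) := by
  ext g
  constructor
  · rintro ⟨⟨u, v⟩, rfl⟩
    exact Set.mul_mem_mul ⟨u, u.2, rfl⟩ ⟨v⁻¹, v⁻¹.2, rfl⟩
  · rintro ⟨_, ⟨u, hu, rfl⟩, _, ⟨v, hv, rfl⟩, rfl⟩
    exact ⟨(⟨u, hu⟩, ⟨v⁻¹, inv_mem hv⟩), by simp [innerLeft, innerRight]⟩

theorem card_mul_card_eq_card_mul_card_gamma :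
    Nat.card U * Nat.card V =
      Nat.card ((proj2 U : Set G) * (proj1 V : Set G)) * Nat.card (gamma U V) := by
  rw [← Nat.card_prod,
    (innerLeft U V).card_eq_card_range_mul_inv_mul_card_eqLocus (innerRight U V),
    range_innerLeft_mul_inv_innerRight]
  rfl

end StarProduct

theorem stmt1_general {F G H : Type*} [Group F] [Group G] [Group H]
    (U : Subgroup (F × G)) (V : Subgroup (G × H)) :
    Nat.card U * Nat.card V =
      Nat.card ((proj2 U : Set G) * (proj1 V : Set G)) * Nat.card (gammaCap U V) *
        Nat.card (U ⋆ V) := by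
  rw [StarProduct.card_mul_card_eq_card_mul_card_gamma, StarProduct.card_gamma, mul_assoc]

/-- For finite groups `F, G, H` and subgroups `U ≤ F × G`, `V ≤ G × H`:
`|U| · |V| = |p₂(U)·p₁(V)| · |Γ∩(U,V)| · |U * V|`. -/
theorem stmt1 {F G H : Type*} [Group F] [Group G] [Group H]
    [Finite F] [Finite G] [Finite H]
    (U : Subgroup (F × G)) (V : Subgroup (G × H)) :
    Nat.card U * Nat.card V =
      Nat.card ((proj2 U : Set G) * (proj1 V : Set G)) * Nat.card (gammaCap U V) *
        Nat.card (U ⋆ V) :=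
  stmt1_general U V
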